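/- arXiv:0712.3496 — 8 statements merged into one kernel-verified Lean document; each statement's English description precedes it below -/
import Mathlib

section
/- Let W be a 4-dimensional real vector space, W = Π₁ ⊕ Π₂ with dim Π₁ = dim Π₂ = 2, let F : Π₁ → Π₂ be a linear isomorphism and L : Π₁ → Π₁ a linear automorphism that is not a real scalar multiple of the identity, and set Π₃ = graph(F), Π₄ = graph(F ∘ L). If J and J' are complex structures on W such that each of Π₁, Π₂, Π₃, Π₄ is a complex subspace for both J and J', then J' = J or J' = −J. -/
/-!
On `P₁` the maps `J` and `J'` restrict to complex structures `A` and `A'`. Invariance of the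
graphs of `F` and `F ∘ L` says that `F` intertwines `J` on `P₁` with `J` on `P₂`, and then that
`A` and `A'` commute with `L`. On a real plane the commutant of a complex structure `A` is
`ℝ 1 + ℝ A ≅ ℂ`; as `L` is not a scalar, `A` is an affine function of `L`, so `A'` commutes with
`A` and `A' = α + β A`. Then `A'² = -1` forces `α = 0`, `β = ±1`, and transporting by `F` gives
`J' = ±J` on `P₂` as well.
-/

open Module

namespace Module.End

variable {V : Type*} [AddCommGroup V] [Module ℝ V] {A B : Module.End ℝ V}

lemma linearIndependent_pair_apply (hA : A * A = -1) {v : V} (hv : v ≠ 0) :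
    LinearIndependent ℝ ![v, A v] := by
  rw [LinearIndependent.pair_iff]
  intro s t hst
  have hAv : A (A v) = -v := by simpa using congr($hA v)
  have hAst : s • A v - t • v = 0 := by simpa [hAv, sub_eq_add_neg] using congr(A $hst)
  have hnorm : (s ^ 2 + t ^ 2) • v = 0 := by
    linear_combination (norm := module) s • hst - t • hAst
  have : s ^ 2 + t ^ 2 = 0 := (smul_eq_zero.mp hnorm).resolve_right hv
  constructor <;> nlinarith

lemma linearIndependent_one_self [Nontrivial V] (hA : A * A = -1) :
    LinearIndependent ℝ ![1, A] := by
  obtain ⟨v, hv⟩ := exists_ne (0 : V)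
  refine LinearIndependent.pair_iff.mpr fun s t hst ↦ ?_
  exact LinearIndependent.pair_iff.mp (linearIndependent_pair_apply hA hv) s t
    (by simpa using congr($hst v))

lemma exists_eq_smul_one_add_smul_of_commute (hV : finrank ℝ V = 2) (hA : A * A = -1)
    (hAB : Commute A B) : ∃ s t : ℝ, B = s • 1 + t • A := by
  have : Nontrivial V := nontrivial_of_finrank_eq_succ hV
  obtain ⟨v, hv⟩ := exists_ne (0 : V)
  have hspan : Submodule.span ℝ {v, A v} = ⊤ := by
    have := (linearIndependent_pair_apply hA hv).span_eq_top_of_card_eq_finrank (by simp [hV])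
    rwa [Matrix.range_cons_cons_empty] at this
  obtain ⟨s, t, hst⟩ := Submodule.mem_span_pair.mp (hspan ▸ Submodule.mem_top : B v ∈ _)
  refine ⟨s, t, LinearMap.ext_on hspan ?_⟩
  have hv' : B v = (s • 1 + t • A) v := by simp [← hst]
  have hcomm : Commute A (s • 1 + t • A) :=
    ((Commute.one_right A).smul_right s).add_right ((Commute.refl A).smul_right t)
  have hAv' : B (A v) = (s • 1 + t • A) (A v) := by
    rw [← mul_apply, ← hAB.eq, mul_apply, hv', ← mul_apply, hcomm.eq, mul_apply]
  rintro w (rfl | rfl | _)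
  · exact hv'
  · exact hAv'

lemma eq_or_eq_neg_of_commute (hV : finrank ℝ V = 2) (hA : A * A = -1) (hB : B * B = -1)
    (hAB : Commute A B) : B = A ∨ B = -A := by
  have : Nontrivial V := nontrivial_of_finrank_eq_succ hV
  obtain ⟨α, β, rfl⟩ := exists_eq_smul_one_add_smul_of_commute hV hA hAB
  have hsq : (α ^ 2 - β ^ 2 + 1) • (1 : Module.End ℝ V) + (2 * α * β) • A = 0 := by
    have hexp : (α • 1 + β • A) * (α • 1 + β • A) =
        (α ^ 2) • (1 : Module.End ℝ V) + (2 * α * β) • A + (β ^ 2) • (A * A) := by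
      simp only [mul_add, add_mul, smul_mul_smul, one_mul, mul_one]
      module
    rw [hB, hA] at hexp
    linear_combination (norm := module) -hexp
  obtain ⟨h1, h2⟩ := LinearIndependent.pair_iff.mp (linearIndependent_one_self hA) _ _ hsq
  obtain rfl : α = 0 := by nlinarith
  rcases sq_eq_one_iff.mp (by linarith : β ^ 2 = 1) with rfl | rfl <;> simp

lemma commute_of_commute_of_ne_smul_one (hV : finrank ℝ V = 2) (hA : A * A = -1)
    {L : Module.End ℝ V} (hL : ∀ c : ℝ, L ≠ c • 1) (hAL : Commute A L) (hBL : Commute B L) :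
    Commute A B := by
  obtain ⟨s, t, rfl⟩ := exists_eq_smul_one_add_smul_of_commute hV hA hAL
  have ht : t ≠ 0 := by
    rintro rfl
    exact hL s (by simp)
  have hA : A = t⁻¹ • ((s • 1 + t • A) - s • 1) := by
    simp [smul_smul, inv_mul_cancel₀ ht]
  rw [hA]
  exact ((hBL.symm.sub_left ((Commute.one_left B).smul_left s)).smul_left _)

end Module.End

section Graph

open LinearMap

variable {W : Type*} [AddCommGroup W] [Module ℝ W] {P₁ P₂ : Submodule ℝ W}

/-- The graph `{x + G x | x ∈ P₁}` of `G : P₁ → P₂`, inside `W` rather than `P₁ × P₂`. -/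
abbrev graphSubmodule (G : P₁ →ₗ[ℝ] P₂) : Submodule ℝ W :=
  range (P₁.subtype + P₂.subtype ∘ₗ G)

variable {J : Module.End ℝ W}

lemma restrict_mul_self_eq_neg_one (hJ1 : ∀ x ∈ P₁, J x ∈ P₁) (hJ : ∀ x, J (J x) = -x) :
    J.restrict hJ1 * J.restrict hJ1 = -1 :=
  LinearMap.ext fun x ↦ Subtype.ext (by simp [hJ])

lemma restrict_comp_eq_comp_restrict_of_mapsTo_graph (hd : Disjoint P₁ P₂)
    (hJ1 : ∀ x ∈ P₁, J x ∈ P₁) (hJ2 : ∀ x ∈ P₂, J x ∈ P₂) {G : P₁ →ₗ[ℝ] P₂}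
    (hJG : ∀ x ∈ graphSubmodule G, J x ∈ graphSubmodule G) :
    J.restrict hJ2 ∘ₗ G = G ∘ₗ J.restrict hJ1 := by
  ext x
  obtain ⟨y, hy⟩ := hJG _ (mem_range_self _ x)
  simp only [LinearMap.add_apply, coe_comp, Function.comp_apply, Submodule.coe_subtype,
    map_add] at hy
  have hdiff : (y : W) - J x = J (G x) - G y := by
    rw [sub_eq_sub_iff_add_eq_add, hy, add_comm]
  have hmem : (y : W) - J x ∈ P₁ ⊓ P₂ :=
    ⟨sub_mem y.2 (hJ1 _ x.2), hdiff ▸ sub_mem (hJ2 _ (G x).2) (G y).2⟩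
  rw [hd.eq_bot, Submodule.mem_bot] at hmem
  have hyx : y = J.restrict hJ1 x := Subtype.ext (sub_eq_zero.mp hmem)
  calc J (G x) = G y := sub_eq_zero.mp (hdiff ▸ hmem)
    _ = G (J.restrict hJ1 x) := by rw [hyx]

lemma commute_restrict_of_mapsTo_graphs (hd : Disjoint P₁ P₂)
    (hJ1 : ∀ x ∈ P₁, J x ∈ P₁) (hJ2 : ∀ x ∈ P₂, J x ∈ P₂) {G : P₁ →ₗ[ℝ] P₂}
    (hG : Function.Injective G) {L : Module.End ℝ P₁}
    (hJG : ∀ x ∈ graphSubmodule G, J x ∈ graphSubmodule G)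
    (hJGL : ∀ x ∈ graphSubmodule (G ∘ₗ L), J x ∈ graphSubmodule (G ∘ₗ L)) :
    Commute (J.restrict hJ1) L := by
  have hG' := restrict_comp_eq_comp_restrict_of_mapsTo_graph hd hJ1 hJ2 hJG
  have hGL := restrict_comp_eq_comp_restrict_of_mapsTo_graph hd hJ1 hJ2 hJGL
  refine LinearMap.ext fun x ↦ hG ?_
  calc G (J.restrict hJ1 (L x)) = J.restrict hJ2 (G (L x)) := congr($hG' (L x)).symm
    _ = G (L (J.restrict hJ1 x)) := congr($hGL x)

lemma eq_smul_of_restrict_eq_smul (hcompl : IsCompl P₁ P₂)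
    (hJ1 : ∀ x ∈ P₁, J x ∈ P₁) (hJ2 : ∀ x ∈ P₂, J x ∈ P₂) {J' : Module.End ℝ W}
    (hJ'1 : ∀ x ∈ P₁, J' x ∈ P₁) (hJ'2 : ∀ x ∈ P₂, J' x ∈ P₂) {G : P₁ →ₗ[ℝ] P₂}
    (hG : Function.Surjective G)
    (hJG : ∀ x ∈ graphSubmodule G, J x ∈ graphSubmodule G)
    (hJ'G : ∀ x ∈ graphSubmodule G, J' x ∈ graphSubmodule G)
    (c : ℝ) (h : J'.restrict hJ'1 = c • J.restrict hJ1) : J' = c • J := by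
  have hJF := restrict_comp_eq_comp_restrict_of_mapsTo_graph hcompl.disjoint hJ1 hJ2 hJG
  have hJ'F := restrict_comp_eq_comp_restrict_of_mapsTo_graph hcompl.disjoint hJ'1 hJ'2 hJ'G
  refine ext_on (s := P₁ ∪ P₂) ?_ ?_
  · rw [Submodule.span_union, Submodule.span_eq, Submodule.span_eq, hcompl.sup_eq_top]
  rintro w (hw | hw)
  · simpa using congr(($h ⟨w, hw⟩ : W))
  · obtain ⟨x, hx⟩ := hG ⟨w, hw⟩
    obtain rfl : (G x : W) = w := congr(Subtype.val $hx)
    calc J' (G x) = G (J'.restrict hJ'1 x) := congr(Subtype.val ($hJ'F x))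
      _ = c • G (J.restrict hJ1 x) := by simp [h]
      _ = c • J (G x) := congr(c • Subtype.val ($hJF x)).symm

end Graph

theorem stmt_0_general (W : Type*) [AddCommGroup W] [Module ℝ W]
    (P₁ P₂ : Submodule ℝ W)
    (hP₁ : Module.finrank ℝ P₁ = 2)
    (hcompl : IsCompl P₁ P₂)
    (F : P₁ →ₗ[ℝ] P₂) (hF : Function.Bijective F)
    (L : P₁ →ₗ[ℝ] P₁)
    (hLid : ∀ c : ℝ, L ≠ c • LinearMap.id)
    (P₃ P₄ : Submodule ℝ W)
    (hP₃ : P₃ = LinearMap.range (P₁.subtype + P₂.subtype ∘ₗ F))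
    (hP₄ : P₄ = LinearMap.range (P₁.subtype + P₂.subtype ∘ₗ (F ∘ₗ L)))
    (J J' : W →ₗ[ℝ] W)
    (hJ : ∀ x, J (J x) = -x) (hJ' : ∀ x, J' (J' x) = -x)
    (hJ1 : ∀ x ∈ P₁, J x ∈ P₁) (hJ2 : ∀ x ∈ P₂, J x ∈ P₂)
    (hJ3 : ∀ x ∈ P₃, J x ∈ P₃) (hJ4 : ∀ x ∈ P₄, J x ∈ P₄)
    (hJ'1 : ∀ x ∈ P₁, J' x ∈ P₁) (hJ'2 : ∀ x ∈ P₂, J' x ∈ P₂)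
    (hJ'3 : ∀ x ∈ P₃, J' x ∈ P₃) (hJ'4 : ∀ x ∈ P₄, J' x ∈ P₄) :
    J' = J ∨ J' = -J := by
  subst hP₃ hP₄
  have hA := restrict_mul_self_eq_neg_one hJ1 hJ
  have hA' := restrict_mul_self_eq_neg_one hJ'1 hJ'
  have hcomm : Commute (J.restrict hJ1) (J'.restrict hJ'1) :=
    Module.End.commute_of_commute_of_ne_smul_one hP₁ hA hLid
      (commute_restrict_of_mapsTo_graphs hcompl.disjoint hJ1 hJ2 hF.injective hJ3 hJ4)
      (commute_restrict_of_mapsTo_graphs hcompl.disjoint hJ'1 hJ'2 hF.injective hJ'3 hJ'4)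
  have hext := eq_smul_of_restrict_eq_smul hcompl hJ1 hJ2 hJ'1 hJ'2 hF.surjective hJ3 hJ'3
  rcases Module.End.eq_or_eq_neg_of_commute hP₁ hA hA' hcomm with h | h
  · exact .inl (by simpa using hext 1 (by simpa using h))
  · exact .inr (by simpa using hext (-1) (by rw [h]; module))

/-- Let `W` be a 4-dimensional real vector space, `W = P₁ ⊕ P₂` with
`dim P₁ = dim P₂ = 2`, let `F : P₁ → P₂` be a linear isomorphism and `L : P₁ → P₁`
a linear automorphism that is not a real scalar multiple of the identity, and set
`P₃ = graph F`, `P₄ = graph (F ∘ L)`. If `J` and `J'` are complex structures on `W`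
such that each of `P₁, P₂, P₃, P₄` is a complex subspace for both `J` and `J'`,
then `J' = J` or `J' = -J`. -/
theorem stmt_0 (W : Type*) [AddCommGroup W] [Module ℝ W]
    (hW : Module.finrank ℝ W = 4)
    (P₁ P₂ : Submodule ℝ W)
    (hP₁ : Module.finrank ℝ P₁ = 2) (hP₂ : Module.finrank ℝ P₂ = 2)
    (hcompl : IsCompl P₁ P₂)
    (F : P₁ →ₗ[ℝ] P₂) (hF : Function.Bijective F)
    (L : P₁ →ₗ[ℝ] P₁) (hL : Function.Bijective L)
    (hLid : ∀ c : ℝ, L ≠ c • LinearMap.id)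
    (P₃ P₄ : Submodule ℝ W)
    (hP₃ : P₃ = LinearMap.range (P₁.subtype + P₂.subtype ∘ₗ F))
    (hP₄ : P₄ = LinearMap.range (P₁.subtype + P₂.subtype ∘ₗ (F ∘ₗ L)))
    (J J' : W →ₗ[ℝ] W)
    (hJ : ∀ x, J (J x) = -x) (hJ' : ∀ x, J' (J' x) = -x)
    (hJ1 : ∀ x ∈ P₁, J x ∈ P₁) (hJ2 : ∀ x ∈ P₂, J x ∈ P₂)
    (hJ3 : ∀ x ∈ P₃, J x ∈ P₃) (hJ4 : ∀ x ∈ P₄, J x ∈ P₄)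
    (hJ'1 : ∀ x ∈ P₁, J' x ∈ P₁) (hJ'2 : ∀ x ∈ P₂, J' x ∈ P₂)
    (hJ'3 : ∀ x ∈ P₃, J' x ∈ P₃) (hJ'4 : ∀ x ∈ P₄, J' x ∈ P₄) :
    J' = J ∨ J' = -J :=
  stmt_0_general W P₁ P₂ hP₁ hcompl F hF L hLid P₃ P₄ hP₃ hP₄ J J' hJ hJ' hJ1 hJ2 hJ3 hJ4 hJ'1 hJ'2
    hJ'3 hJ'4
end

section
/- Let W be a 4-dimensional real vector space, W = Π₁ ⊕ Π₂ with dim Π₁ = dim Π₂ = 2, let F : Π₁ → Π₂ be a linear isomorphism and L : Π₁ → Π₁ a linear automorphism that is not a real scalar multiple of the identity, and set Π₃ = graph(F), Π₄ = graph(F ∘ L). Then there exists a complex structure J on W for which Π₁, Π₂, Π₃, Π₄ are all complex subspaces if and only if L has no real eigenvalue. -/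
/-!
A complex structure `J` preserving `P₁` and `P₂` is a sum `J₁ ⊕ J₂`, and it preserves the graphs
of `F` and `F ∘ L` exactly when `J₂ F = F J₁` and `J₂ F L = F L J₁`; eliminating `J₂`, this says
that `J₁` commutes with `L`. A complex structure on a plane commuting with `L` preserves every
real eigenspace of `L`, so such an eigenspace has even dimension and is the whole plane, forcing
`L` to be scalar. Conversely, if `L` has no real eigenvalue then its characteristic polynomial
`X² - tX + d` has negative discriminant, and `J₁ = (2L - t) / √(4d - t²)` is a complex structure
commuting with `L`; take `J₂ = F J₁ F⁻¹`.
-/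

open Module Polynomial

namespace Module.End

variable {𝕜 V : Type*} [Field 𝕜] [LinearOrder 𝕜] [IsStrictOrderedRing 𝕜]
  [AddCommGroup V] [Module 𝕜 V] {K L : Module.End 𝕜 V}

theorem linearIndependent_pair_of_mul_self_eq_neg_one (hK : K * K = -1) {v : V} (hv : v ≠ 0) :
    LinearIndependent 𝕜 ![v, K v] := by
  rw [LinearIndependent.pair_iff' hv]
  intro t ht
  have hKK : K (K v) = -v := by simpa using congr($hK v)
  have : (t * t + 1) • v = 0 := by
    rw [← ht, map_smul, ← ht, smul_smul] at hKK
    rw [add_smul, hKK, one_smul, neg_add_cancel]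
  exact (smul_eq_zero.1 this).elim (fun h => by nlinarith) hv

theorem eq_smul_id_of_commute_of_hasEigenvalue (hV : finrank 𝕜 V = 2) (hK : K * K = -1)
    (hKL : Commute K L) {c : 𝕜} (hc : L.HasEigenvalue c) : L = c • LinearMap.id := by
  obtain ⟨v, hv⟩ := hc.exists_hasEigenvector
  have hKv : K v ∈ L.eigenspace c := by
    rw [mem_eigenspace_iff, ← mul_apply, ← hKL.eq, mul_apply, hv.apply_eq_smul, map_smul]
  have hspan : Submodule.span 𝕜 (Set.range ![v, K v]) = ⊤ :=
    (linearIndependent_pair_of_mul_self_eq_neg_one hK hv.2).span_eq_top_of_card_eq_finrank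
      (by simp [hV])
  have htop : L.eigenspace c = ⊤ := by
    rw [eq_top_iff, ← hspan, Submodule.span_le, Matrix.range_cons_cons_empty]
    exact Set.insert_subset hv.1 (Set.singleton_subset_iff.2 hKv)
  ext x
  simpa using mem_eigenspace_iff.1 (htop ▸ Submodule.mem_top : x ∈ L.eigenspace c)

end Module.End

theorem LinearMap.charpoly_eq_of_finrank_eq_two {K V : Type*} [Field K] [AddCommGroup V]
    [Module K V] [FiniteDimensional K V] (hV : finrank K V = 2) (f : Module.End K V) :
    f.charpoly = X ^ 2 - C (LinearMap.trace K V f) * X + C (LinearMap.det f) := by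
  let b := Module.finBasisOfFinrankEq K V hV
  rw [← f.charpoly_toMatrix b, Matrix.charpoly_fin_two, LinearMap.trace_eq_matrix_trace K b,
    LinearMap.det_toMatrix]

theorem Module.End.exists_mul_self_eq_neg_one_commute {V : Type*} [AddCommGroup V] [Module ℝ V]
    (hV : finrank ℝ V = 2) {L : Module.End ℝ V}
    (hL : ∀ c : ℝ, ¬ L.HasEigenvalue c) : ∃ K : Module.End ℝ V, K * K = -1 ∧ Commute K L := by
  have : FiniteDimensional ℝ V := Module.finite_of_finrank_eq_succ hV
  have hχ := L.charpoly_eq_of_finrank_eq_two hV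
  set t := LinearMap.trace ℝ V L
  set d := LinearMap.det L
  have hdisc : t ^ 2 - 4 * d < 0 := by
    by_contra! h
    obtain ⟨x, hx⟩ := exists_quadratic_eq_zero (a := 1) (b := -t) (c := d) one_ne_zero
      ⟨√(t ^ 2 - 4 * d), by rw [discrim, Real.mul_self_sqrt h]; ring⟩
    refine hL x ((Module.End.hasEigenvalue_iff_isRoot_charpoly L x).2 ?_)
    simp only [hχ, IsRoot, eval_add, eval_sub, eval_mul, eval_pow, eval_C, eval_X]
    linear_combination hx
  set s := √(4 * d - t ^ 2)
  have hs : s ^ 2 = 4 * d - t ^ 2 := Real.sq_sqrt (by linarith)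
  have hs0 : s ≠ 0 := (Real.sqrt_pos.2 (by linarith)).ne'
  set q : ℝ[X] := C (2 / s) * X - C (t / s)
  -- `q(L) ^ 2 = -1` by Cayley–Hamilton, because:
  have hq : q * q + 1 = C (4 / s ^ 2) * L.charpoly := by
    refine Polynomial.funext fun x => ?_
    simp only [q, hχ, eval_add, eval_sub, eval_mul, eval_pow, eval_C, eval_X, eval_one]
    field_simp
    linear_combination hs
  refine ⟨aeval L q, ?_, ?_⟩
  · have h := congr(aeval L $hq)
    rwa [map_add, map_mul, map_one, map_mul, L.aeval_self_charpoly, mul_zero,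
      ← eq_neg_iff_add_eq_zero] at h
  · simpa using (Commute.all q X).map (aeval L)

namespace Submodule

variable {R W : Type*} [Ring R] [AddCommGroup W] [Module R W] {P₁ P₂ : Submodule R W}

/-- The graph of `G` as a subspace of `W` (rather than of `P₁ × P₂`, as `LinearMap.graph`). -/
def internalGraph (G : P₁ →ₗ[R] P₂) : Submodule R W :=
  LinearMap.range (P₁.subtype + P₂.subtype ∘ₗ G)

theorem mem_internalGraph {G : P₁ →ₗ[R] P₂} {w : W} :
    w ∈ internalGraph G ↔ ∃ a : P₁, (a : W) + G a = w := by
  simp [internalGraph]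

theorem restrict_comp_eq_of_mapsTo_internalGraph (hc : IsCompl P₁ P₂) {J : Module.End R W}
    (h₁ : ∀ x ∈ P₁, J x ∈ P₁) (h₂ : ∀ x ∈ P₂, J x ∈ P₂) {G : P₁ →ₗ[R] P₂}
    (hG : ∀ x ∈ internalGraph G, J x ∈ internalGraph G) :
    J.restrict h₂ ∘ₗ G = G ∘ₗ J.restrict h₁ := by
  ext a
  obtain ⟨b, hb⟩ := mem_internalGraph.1 (hG _ (mem_internalGraph.2 ⟨a, rfl⟩))
  have : (b, G b) = (J.restrict h₁ a, J.restrict h₂ (G a)) :=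
    (prodEquivOfIsCompl P₁ P₂ hc).injective (by simpa using hb)
  simp only [Prod.ext_iff] at this
  simp [← this.1, ← this.2]

theorem ofIsCompl_mapsTo_internalGraph (hc : IsCompl P₁ P₂) {K₁ : Module.End R P₁}
    {K₂ : Module.End R P₂} {G : P₁ →ₗ[R] P₂} (hG : K₂ ∘ₗ G = G ∘ₗ K₁) :
    ∀ x ∈ internalGraph G,
      LinearMap.ofIsCompl hc (P₁.subtype ∘ₗ K₁) (P₂.subtype ∘ₗ K₂) x ∈ internalGraph G := by
  rintro - ⟨a, rfl⟩
  refine mem_internalGraph.2 ⟨K₁ a, ?_⟩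
  have h := LinearMap.congr_fun hG a
  simp only [LinearMap.comp_apply] at h
  simp [h]

theorem ofIsCompl_apply_ofIsCompl_eq_neg (hc : IsCompl P₁ P₂) {K₁ : Module.End R P₁}
    {K₂ : Module.End R P₂} (hK₁ : K₁ * K₁ = -1) (hK₂ : K₂ * K₂ = -1) (x : W) :
    LinearMap.ofIsCompl hc (P₁.subtype ∘ₗ K₁) (P₂.subtype ∘ₗ K₂)
      (LinearMap.ofIsCompl hc (P₁.subtype ∘ₗ K₁) (P₂.subtype ∘ₗ K₂) x) = -x := by
  obtain ⟨a, b, rfl, -⟩ := existsUnique_add_of_isCompl hc x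
  have h₁ : K₁ (K₁ a) = -a := by simpa using congr($hK₁ a)
  have h₂ : K₂ (K₂ b) = -b := by simpa using congr($hK₂ b)
  simp [h₁, h₂, add_comm]

end Submodule

theorem stmt_1_general (W : Type*) [AddCommGroup W] [Module ℝ W]
    (P₁ P₂ : Submodule ℝ W)
    (hP₁ : Module.finrank ℝ P₁ = 2)
    (hcompl : IsCompl P₁ P₂)
    (F : P₁ →ₗ[ℝ] P₂) (hF : Function.Bijective F)
    (L : P₁ →ₗ[ℝ] P₁)
    (hLid : ∀ c : ℝ, L ≠ c • LinearMap.id)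
    (P₃ P₄ : Submodule ℝ W)
    (hP₃ : P₃ = LinearMap.range (P₁.subtype + P₂.subtype ∘ₗ F))
    (hP₄ : P₄ = LinearMap.range (P₁.subtype + P₂.subtype ∘ₗ (F ∘ₗ L))) :
    (∃ J : W →ₗ[ℝ] W, (∀ x, J (J x) = -x) ∧
        (∀ x ∈ P₁, J x ∈ P₁) ∧ (∀ x ∈ P₂, J x ∈ P₂) ∧
        (∀ x ∈ P₃, J x ∈ P₃) ∧ (∀ x ∈ P₄, J x ∈ P₄)) ↔
      ∀ c : ℝ, ¬ Module.End.HasEigenvalue (L : Module.End ℝ P₁) c := by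
  change P₃ = Submodule.internalGraph F at hP₃
  change P₄ = Submodule.internalGraph (F ∘ₗ L) at hP₄
  subst hP₃ hP₄
  constructor
  · rintro ⟨J, hJ, h₁, h₂, h₃, h₄⟩ c hc
    have hJ₁ : J.restrict h₁ * J.restrict h₁ = -1 := LinearMap.ext fun a => Subtype.ext (hJ a)
    have hF₃ := Submodule.restrict_comp_eq_of_mapsTo_internalGraph hcompl h₁ h₂ h₃
    have hF₄ := Submodule.restrict_comp_eq_of_mapsTo_internalGraph hcompl h₁ h₂ h₄
    have hJL : Commute (J.restrict h₁) L := by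
      refine (LinearMap.cancel_left hF.1).1 ?_
      rw [Module.End.mul_eq_comp, Module.End.mul_eq_comp, ← LinearMap.comp_assoc, ← hF₃,
        LinearMap.comp_assoc, hF₄, LinearMap.comp_assoc]
    exact hLid c (Module.End.eq_smul_id_of_commute_of_hasEigenvalue hP₁ hJ₁ hJL hc)
  · intro hno
    obtain ⟨K, hK, hKL⟩ := Module.End.exists_mul_self_eq_neg_one_commute hP₁ hno
    let K' := (LinearEquiv.ofBijective F hF).conjRingEquiv K
    have hK' : K' * K' = -1 := by simp only [K', ← map_mul, hK, map_neg, map_one]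
    have hKF : K' ∘ₗ F = F ∘ₗ K := by ext; simp [K']
    have hKFL : K' ∘ₗ (F ∘ₗ L) = (F ∘ₗ L) ∘ₗ K := by
      rw [← LinearMap.comp_assoc, hKF, LinearMap.comp_assoc, ← Module.End.mul_eq_comp, hKL.eq,
        Module.End.mul_eq_comp, LinearMap.comp_assoc]
    exact ⟨LinearMap.ofIsCompl hcompl (P₁.subtype ∘ₗ K) (P₂.subtype ∘ₗ K'),
      Submodule.ofIsCompl_apply_ofIsCompl_eq_neg hcompl hK hK',
      fun x hx => by lift x to P₁ using hx; simp,
      fun x hx => by lift x to P₂ using hx; simp,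
      Submodule.ofIsCompl_mapsTo_internalGraph hcompl hKF,
      Submodule.ofIsCompl_mapsTo_internalGraph hcompl hKFL⟩

/-- Let `W` be a 4-dimensional real vector space, `W = P₁ ⊕ P₂` with
`dim P₁ = dim P₂ = 2`, let `F : P₁ → P₂` be a linear isomorphism and `L : P₁ → P₁`
a linear automorphism that is not a real scalar multiple of the identity, and set
`P₃ = graph F`, `P₄ = graph (F ∘ L)`. Then there exists a complex structure `J` on `W`
for which `P₁, P₂, P₃, P₄` are all complex subspaces if and only if `L` has no real
eigenvalue. -/
theorem stmt_1 (W : Type*) [AddCommGroup W] [Module ℝ W]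
    (hW : Module.finrank ℝ W = 4)
    (P₁ P₂ : Submodule ℝ W)
    (hP₁ : Module.finrank ℝ P₁ = 2) (hP₂ : Module.finrank ℝ P₂ = 2)
    (hcompl : IsCompl P₁ P₂)
    (F : P₁ →ₗ[ℝ] P₂) (hF : Function.Bijective F)
    (L : P₁ →ₗ[ℝ] P₁) (hL : Function.Bijective L)
    (hLid : ∀ c : ℝ, L ≠ c • LinearMap.id)
    (P₃ P₄ : Submodule ℝ W)
    (hP₃ : P₃ = LinearMap.range (P₁.subtype + P₂.subtype ∘ₗ F))
    (hP₄ : P₄ = LinearMap.range (P₁.subtype + P₂.subtype ∘ₗ (F ∘ₗ L))) :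
    (∃ J : W →ₗ[ℝ] W, (∀ x, J (J x) = -x) ∧
        (∀ x ∈ P₁, J x ∈ P₁) ∧ (∀ x ∈ P₂, J x ∈ P₂) ∧
        (∀ x ∈ P₃, J x ∈ P₃) ∧ (∀ x ∈ P₄, J x ∈ P₄)) ↔
      ∀ c : ℝ, ¬ Module.End.HasEigenvalue (L : Module.End ℝ P₁) c :=
  stmt_1_general W P₁ P₂ hP₁ hcompl F hF L hLid P₃ P₄ hP₃ hP₄
end

section
/- Let V be a 2-dimensional real vector space and L : V → V an ℝ-linear endomorphism that is not a real scalar multiple of the identity. If J and J' are complex structures on V (i.e. J ∘ J = −id and J' ∘ J' = −id) and both commute with L, then J' = J or J' = −J. -/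
/-!
Fix a nonzero vector `v`. Since `J² = -1`, `J` has no eigenvector, `v, J v` is a basis, and every
endomorphism commuting with `J` is of the form `a + b J`. So `L = a + b J` with `b ≠ 0`, hence
`J'` commutes with `L` iff it commutes with `J`, and `J' = c + d J`. Finally
`(c + d J)² = (c² - d²) + 2 c d J = -1` forces `c = 0` and `d = ±1`.
-/

open Module

namespace Module.End

variable {K V : Type*} [Field K] [LinearOrder K] [IsStrictOrderedRing K]
  [AddCommGroup V] [Module K V] {J : End K V}

theorem linearIndependent_pair_apply_of_mul_self_eq_neg_one (hJ : J * J = -1) {v : V}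
    (hv : v ≠ 0) : LinearIndependent K ![v, J v] := by
  rw [LinearIndependent.pair_iff' hv]
  intro a ha
  have hJJ : J (J v) = -v := by simpa using congr($hJ v)
  have : (a ^ 2 + 1) • v = 0 := by
    have h := congrArg J ha
    rw [map_smul, hJJ, ← ha] at h
    linear_combination (norm := module) h
  exact hv ((smul_eq_zero.mp this).resolve_left (by positivity))

theorem exists_eq_smul_one_add_smul_of_commute_s2 (hV : finrank K V = 2) (hJ : J * J = -1)
    {f : End K V} (hf : Commute J f) : ∃ a b : K, f = a • 1 + b • J := by
  have : Nontrivial V := Module.nontrivial_of_finrank_eq_succ hV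
  obtain ⟨v, hv⟩ := exists_ne (0 : V)
  have hspan : Submodule.span K (Set.range ![v, J v]) = ⊤ :=
    (linearIndependent_pair_apply_of_mul_self_eq_neg_one hJ hv).span_eq_top_of_card_eq_finrank
      (by simp [hV])
  obtain ⟨c, hc⟩ := (Submodule.mem_span_range_iff_exists_fun K).mp
    (hspan ▸ Submodule.mem_top : f v ∈ Submodule.span K (Set.range ![v, J v]))
  have hJJ : J (J v) = -v := by simpa using congr($hJ v)
  have hfv : f v = c 0 • v + c 1 • J v := by simpa [Fin.sum_univ_two] using hc.symm
  refine ⟨c 0, c 1, LinearMap.ext_on_range hspan (Fin.forall_fin_two.mpr ⟨?_, ?_⟩)⟩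
  · simpa using hfv
  · rw [Matrix.cons_val_one, Matrix.cons_val_zero, ← Module.End.mul_apply, ← hf.eq,
      Module.End.mul_apply, hfv]
    simp [hJJ, add_comm]

theorem smul_one_add_smul_eq_or_eq_neg_of_mul_self_eq_neg_one [Nontrivial V] (hJ : J * J = -1)
    {c d : K} (h : (c • 1 + d • J) * (c • 1 + d • J) = -1) :
    c • 1 + d • J = J ∨ c • 1 + d • J = -J := by
  obtain ⟨v, hv⟩ := exists_ne (0 : V)
  have hJJ : J (J v) = -v := by simpa using congr($hJ v)
  have hexp : (c ^ 2 - d ^ 2) • v + (2 * c * d) • J v = (-1 : K) • v + (0 : K) • J v := by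
    have := congr($h v)
    simp only [Module.End.mul_apply, LinearMap.add_apply, LinearMap.smul_apply,
      Module.End.one_apply, LinearMap.neg_apply, map_add, map_smul, hJJ] at this
    linear_combination (norm := module) this
  obtain ⟨hre, him⟩ :=
    (linearIndependent_pair_apply_of_mul_self_eq_neg_one hJ hv).eq_of_pair hexp
  have hc : c = 0 := by
    rcases mul_eq_zero.mp (show c * d = 0 by linarith) with hc | hd
    · exact hc
    · subst hd; nlinarith
  obtain rfl | rfl : d = 1 ∨ d = -1 := mul_self_eq_one_iff.mp (by subst hc; linarith)
  all_goals simp [hc]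

theorem eq_or_eq_neg_of_commute_s2 (hV : finrank K V = 2) {J' : End K V} (hJ : J * J = -1)
    (hJ' : J' * J' = -1) (hJJ' : Commute J J') : J' = J ∨ J' = -J := by
  have : Nontrivial V := Module.nontrivial_of_finrank_eq_succ hV
  obtain ⟨c, d, rfl⟩ := exists_eq_smul_one_add_smul_of_commute_s2 hV hJ hJJ'
  exact smul_one_add_smul_eq_or_eq_neg_of_mul_self_eq_neg_one hJ hJ'

end Module.End

/-- Let `V` be a 2-dimensional real vector space and `L : V → V` an
ℝ-linear endomorphism that is not a real scalar multiple of the identity. If `J` and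
`J'` are complex structures on `V` and both commute with `L`, then `J' = J` or
`J' = -J`. -/
theorem stmt_2 (V : Type*) [AddCommGroup V] [Module ℝ V]
    (hV : Module.finrank ℝ V = 2)
    (L : V →ₗ[ℝ] V) (hLid : ∀ c : ℝ, L ≠ c • LinearMap.id)
    (J J' : V →ₗ[ℝ] V)
    (hJ : ∀ x, J (J x) = -x) (hJ' : ∀ x, J' (J' x) = -x)
    (hJL : J ∘ₗ L = L ∘ₗ J) (hJ'L : J' ∘ₗ L = L ∘ₗ J') :
    J' = J ∨ J' = -J := by
  have hJJ : J * J = -1 := LinearMap.ext hJ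
  have hJ'J' : J' * J' = -1 := LinearMap.ext hJ'
  obtain ⟨a, b, rfl⟩ :=
    Module.End.exists_eq_smul_one_add_smul_of_commute_s2 hV hJJ (show Commute J L from hJL)
  have hb : b ≠ 0 := by
    rintro rfl
    exact hLid a (by simp [Module.End.one_eq_id])
  have hJ'J : Commute J' J := by
    have := (show Commute J' (a • 1 + b • J) from hJ'L).sub_right
      ((Commute.one_right J').smul_right a)
    rwa [add_sub_cancel_left, Commute.smul_right_iff₀ hb] at this
  exact Module.End.eq_or_eq_neg_of_commute_s2 hV hJJ hJ'J' hJ'J.symm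
end

section
/- Let V be a 2-dimensional real vector space and L : V → V an ℝ-linear endomorphism that is not a real scalar multiple of the identity. If L has a real eigenvalue, then there is no complex structure J on V (i.e. ℝ-linear J with J ∘ J = −id) commuting with L. -/
/-- Let `V` be a 2-dimensional real vector space and `L : V → V` an
ℝ-linear endomorphism that is not a real scalar multiple of the identity. If `L` has
a real eigenvalue, then there is no complex structure `J` on `V` commuting with `L`. -/
theorem stmt_3 (V : Type*) [AddCommGroup V] [Module ℝ V]
    (hV : Module.finrank ℝ V = 2)
    (L : V →ₗ[ℝ] V) (hLid : ∀ c : ℝ, L ≠ c • LinearMap.id)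
    (hEig : ∃ c : ℝ, Module.End.HasEigenvalue (L : Module.End ℝ V) c) :
    ¬ ∃ J : V →ₗ[ℝ] V, (∀ x, J (J x) = -x) ∧ J ∘ₗ L = L ∘ₗ J := by
  rintro ⟨J, hJ2, hJL⟩
  obtain ⟨c, hc⟩ := hEig
  obtain ⟨v, hv⟩ := hc.exists_hasEigenvector
  have hv0 : v ≠ 0 := hv.2
  have hLv : L v = c • v := hv.apply_eq_smul
  have hLJv : L (J v) = c • J v := by
    have h := congrArg (fun f : V →ₗ[ℝ] V => f v) hJL
    simp only [LinearMap.comp_apply] at h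
    rw [← h, hLv, map_smul]
  -- v and J v are linearly independent
  have hli : LinearIndependent ℝ ![v, J v] := by
    rw [LinearIndependent.pair_iff]
    intro s t hst
    have h2 : s • J v = t • v := by
      have := congrArg J hst
      simpa [map_add, map_smul, hJ2, neg_smul, ← sub_eq_add_neg, sub_eq_zero] using this
    have hsum : (s ^ 2 + t ^ 2) • v = 0 := by
      have e1 := congrArg (s • ·) hst
      have e2 := congrArg (t • ·) h2
      simp only [smul_add, smul_smul, smul_zero] at e1 e2
      have e2' : (t * s) • J v - (t * t) • v = 0 := sub_eq_zero.mpr e2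
      have key : (s ^ 2 + t ^ 2) • v =
          ((s * s) • v + (s * t) • J v) - ((t * s) • J v - (t * t) • v) := by module
      rw [key, e1, e2', sub_zero]
    have hst0 : s ^ 2 + t ^ 2 = 0 := by
      by_contra h
      exact hv0 (by simpa [h] using smul_eq_zero.mp hsum)
    constructor
    · nlinarith [sq_nonneg s, sq_nonneg t]
    · nlinarith [sq_nonneg s, sq_nonneg t]
  have hcard : Fintype.card (Fin 2) = Module.finrank ℝ V := by simp [hV]
  let B := basisOfLinearIndependentOfCardEqFinrank hli hcard
  have hB : ⇑B = ![v, J v] := coe_basisOfLinearIndependentOfCardEqFinrank hli hcard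
  apply hLid c
  apply B.ext
  intro i
  rw [hB]
  fin_cases i <;>
    simp [hLv, hLJv]
end

section
/- Let T be a finite-dimensional real vector space with a linear complex structure J and let N be a linear Nijenhuis tensor on (T, J). Then for every ξ ∈ T one has ω(ξ, Jξ) = 2·Tr(v ↦ N(ξ, N(ξ, v))), where ω(ξ, η) = Tr(v ↦ N(ξ, J N(η, v)) − N(η, J N(ξ, v))). -/
/-- Let `T` be a finite-dimensional real vector space with a linear
complex structure `J` and let `N` be a linear Nijenhuis tensor on `(T, J)`. Then for
every `ξ ∈ T` one has `ω(ξ, Jξ) = 2·Tr(v ↦ N(ξ, N(ξ, v)))`, where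
`ω(ξ, η) = Tr(v ↦ N(ξ, J N(η, v)) - N(η, J N(ξ, v)))`. -/
theorem stmt_6 (T : Type*) [AddCommGroup T] [Module ℝ T] [FiniteDimensional ℝ T]
    (J : T →ₗ[ℝ] T) (hJ : ∀ x, J (J x) = -x)
    (N : T →ₗ[ℝ] T →ₗ[ℝ] T)
    (hNalt : ∀ x, N x x = 0)
    (hNJ : ∀ x y, N (J x) y = -J (N x y))
    (ω : T → T → ℝ)
    (hω : ∀ ξ η, ω ξ η =
      LinearMap.trace ℝ T ((N ξ) ∘ₗ J ∘ₗ (N η) - (N η) ∘ₗ J ∘ₗ (N ξ))) :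
    ∀ ξ, ω ξ (J ξ) = 2 * LinearMap.trace ℝ T ((N ξ) ∘ₗ (N ξ)) := by
  intro ξ
  have hanti : ∀ x y, N x y = -N y x := by
    intro x y
    have h := hNalt (x + y)
    simp only [map_add, LinearMap.add_apply, hNalt, zero_add, add_zero] at h
    exact eq_neg_of_add_eq_zero_right h
  have hNJ2 : ∀ x y, N x (J y) = -J (N x y) := by
    intro x y
    rw [hanti x (J y), hNJ, hanti y x]
    simp
  have key : (N ξ) ∘ₗ J ∘ₗ (N (J ξ)) - (N (J ξ)) ∘ₗ J ∘ₗ (N ξ)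
      = (2 : ℝ) • ((N ξ) ∘ₗ (N ξ)) := by
    ext v
    simp only [LinearMap.sub_apply, LinearMap.comp_apply, LinearMap.smul_apply,
      hNJ, hNJ2, map_neg, hJ]
    module
  rw [hω, key, map_smul, smul_eq_mul]
end

section
/- Let T be a finite-dimensional real vector space with a linear complex structure J and let N be a linear Nijenhuis tensor on (T, J). Define q(ξ, η) = ω(ξ, Jη), where ω(ξ, η) = Tr(v ↦ N(ξ, J N(η, v)) − N(η, J N(ξ, v))). Then q(ξ, η) = Tr(v ↦ N(ξ, N(η, v)) + N(η, N(ξ, v))) for all ξ, η ∈ T; in particular q is a symmetric bilinear form and it is J-invariant: q(Jξ, Jη) = q(ξ, η). -/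
/-- Let `T` be a finite-dimensional real vector space with a linear
complex structure `J` and let `N` be a linear Nijenhuis tensor on `(T, J)`. Define
`q(ξ, η) = ω(ξ, Jη)` where `ω(ξ, η) = Tr(v ↦ N(ξ, J N(η, v)) - N(η, J N(ξ, v)))`.
Then `q(ξ, η) = Tr(v ↦ N(ξ, N(η, v)) + N(η, N(ξ, v)))` for all `ξ, η ∈ T`; in
particular `q` is a symmetric bilinear form and `q(Jξ, Jη) = q(ξ, η)`. -/
theorem stmt_7 (T : Type*) [AddCommGroup T] [Module ℝ T] [FiniteDimensional ℝ T]
    (J : T →ₗ[ℝ] T) (hJ : ∀ x, J (J x) = -x)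
    (N : T →ₗ[ℝ] T →ₗ[ℝ] T)
    (hNalt : ∀ x, N x x = 0)
    (hNJ : ∀ x y, N (J x) y = -J (N x y))
    (ω : T → T → ℝ)
    (hω : ∀ ξ η, ω ξ η =
      LinearMap.trace ℝ T ((N ξ) ∘ₗ J ∘ₗ (N η) - (N η) ∘ₗ J ∘ₗ (N ξ)))
    (q : T → T → ℝ)
    (hq : ∀ ξ η, q ξ η = ω ξ (J η)) :
    (∀ ξ η, q ξ η = LinearMap.trace ℝ T ((N ξ) ∘ₗ (N η) + (N η) ∘ₗ (N ξ))) ∧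
    (∀ ξ η, q η ξ = q ξ η) ∧
    (∀ ξ η, q (J ξ) (J η) = q ξ η) := by
  have hsk : ∀ x y, N x y = -N y x := by
    intro x y
    have h := hNalt (x + y)
    simp only [map_add, LinearMap.add_apply, hNalt, zero_add, add_zero] at h
    exact eq_neg_of_add_eq_zero_right h
  have hNJ2 : ∀ x y, N x (J y) = -J (N x y) := by
    intro x y
    rw [hsk x (J y), hNJ, hsk y x, map_neg, neg_neg]
  have key : ∀ ξ η, q ξ η =
      LinearMap.trace ℝ T ((N ξ) ∘ₗ (N η) + (N η) ∘ₗ (N ξ)) := by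
    intro ξ η
    rw [hq, hω]
    congr 1
    ext v
    simp [hNJ, hNJ2, hJ, sub_neg_eq_add]
  refine ⟨key, fun ξ η => ?_, fun ξ η => ?_⟩
  · rw [key, key, add_comm]
  · rw [key, key]
    congr 1
    ext v
    simp [hNJ, hNJ2, hJ]
end

section
/- Let T be a 6-dimensional real vector space with a linear complex structure J, and suppose T = V₁ ⊕ V₂ ⊕ V₃, where each Vᵢ is a 2-dimensional J-invariant subspace. Let N be a linear Nijenhuis tensor on (T, J) such that for all i ≠ j, N(Vᵢ × Vⱼ) ⊆ Vᵢ + Vⱼ but N(Vᵢ × Vⱼ) is not contained in Vᵢ. Then N has trivial kernel: for every nonzero ξ ∈ T there exists η ∈ T with N(ξ, η) ≠ 0. -/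
/-- Let `T` be a 6-dimensional real vector space with a linear complex
structure `J`, and suppose `T = V₀ ⊕ V₁ ⊕ V₂` where each `Vᵢ` is a 2-dimensional
`J`-invariant subspace. Let `N` be a linear Nijenhuis tensor on `(T, J)` such that
for all `i ≠ j`, `N(Vᵢ × Vⱼ) ⊆ Vᵢ + Vⱼ` but `N(Vᵢ × Vⱼ)` is not contained in `Vᵢ`.
Then `N` has trivial kernel: for every nonzero `ξ ∈ T` there is `η` with `N(ξ,η) ≠ 0`. -/
theorem stmt_10 (T : Type*) [AddCommGroup T] [Module ℝ T]
    (hT : Module.finrank ℝ T = 6)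
    (J : T →ₗ[ℝ] T) (hJ : ∀ x, J (J x) = -x)
    (V : Fin 3 → Submodule ℝ T)
    (hdim : ∀ i, Module.finrank ℝ (V i) = 2)
    (hJV : ∀ i, ∀ x ∈ V i, J x ∈ V i)
    (hsum : DirectSum.IsInternal V)
    (N : T →ₗ[ℝ] T →ₗ[ℝ] T)
    (hNalt : ∀ x, N x x = 0)
    (hNJ : ∀ x y, N (J x) y = -J (N x y))
    (hNVsub : ∀ i j, i ≠ j → ∀ x ∈ V i, ∀ y ∈ V j, N x y ∈ V i ⊔ V j)
    (hNVgen : ∀ i j, i ≠ j → ¬ (∀ x ∈ V i, ∀ y ∈ V j, N x y ∈ V i)) :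
    ∀ ξ : T, ξ ≠ 0 → ∃ η : T, N ξ η ≠ 0 := by
  have hfin : FiniteDimensional ℝ T := FiniteDimensional.of_finrank_pos (by omega)
  -- antisymmetry of N
  have hNanti : ∀ x y : T, N x y = - N y x := by
    intro x y
    have h := hNalt (x + y)
    simp only [map_add, LinearMap.add_apply, hNalt] at h
    have h' : N x y + N y x = 0 := by
      calc N x y + N y x = 0 + N y x + (N x y + 0) := by abel
        _ = 0 := h
    exact eq_neg_of_add_eq_zero_left h'
  -- independence of v, J v
  have hJpair : ∀ (a b : ℝ) (v : T), v ≠ 0 → a • v + b • J v = 0 → a = 0 ∧ b = 0 := by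
    intro a b v hv h
    have h2 : a • J v + b • (-v) = 0 := by
      have := congrArg J h
      simpa [map_add, map_smul, hJ] using this
    have key : (a ^ 2 + b ^ 2) • v = a • (a • v + b • J v) - b • (a • J v + b • (-v)) := by
      module
    rw [h, h2, smul_zero, smul_zero, sub_zero] at key
    rcases smul_eq_zero.mp key with hab | hv'
    · constructor <;> nlinarith
    · exact absurd hv' hv
  -- spanning: each V i is the complex line through any of its nonzero vectors
  have hspan : ∀ i (v : T), v ∈ V i → v ≠ 0 → ∀ x ∈ V i, ∃ a b : ℝ, x = a • v + b • J v := by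
    intro i v hvV hv x hx
    have hli : LinearIndependent ℝ ![v, J v] :=
      LinearIndependent.pair_iff.mpr fun s t hst => hJpair s t v hv hst
    have hle : Submodule.span ℝ {v, J v} ≤ V i := by
      rw [Submodule.span_le]
      rintro z (rfl | rfl)
      · exact hvV
      · exact hJV i v hvV
    have hrange : Set.range ![v, J v] = {v, J v} := by
      ext z
      simp [Fin.exists_fin_two, or_comm]
    have hfr : Module.finrank ℝ (Submodule.span ℝ ({v, J v} : Set T)) = 2 := by
      rw [← hrange, finrank_span_eq_card hli]
      simp
    have heq : Submodule.span ℝ ({v, J v} : Set T) = V i :=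
      Submodule.eq_of_le_of_finrank_eq hle (by rw [hfr, hdim i])
    rw [← heq] at hx
    obtain ⟨a, b, hab⟩ := Submodule.mem_span_pair.mp hx
    exact ⟨a, b, hab.symm⟩
  -- N vanishes on each V i × V i
  have hsame : ∀ i (v : T), v ∈ V i → v ≠ 0 → ∀ x ∈ V i, N x v = 0 := by
    intro i v hvV hv x hx
    obtain ⟨a, b, rfl⟩ := hspan i v hvV hv x hx
    simp [map_add, map_smul, LinearMap.add_apply, LinearMap.smul_apply, hNalt, hNJ]
  -- disjointness from the internal direct sum
  have hdisj : ∀ i j k : Fin 3, j ≠ i → k ≠ i → Disjoint (V i) (V j ⊔ V k) := by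
    intro i j k hj hk
    have h := hsum.submodule_iSupIndep i
    exact h.mono_right (sup_le (le_iSup₂ (f := fun l (_ : l ≠ i) => V l) j hj)
      (le_iSup₂ (f := fun l (_ : l ≠ i) => V l) k hk))
  -- main step: each component of a kernel vector vanishes
  have main : ∀ (i j k : Fin 3), j ≠ i → k ≠ i → k ≠ j →
      ∀ a ∈ V i, ∀ b ∈ V j, ∀ c ∈ V k, (∀ η, N (a + b + c) η = 0) → a = 0 := by
    intro i j k hji hki hkj a ha b hb c hc hker
    by_contra hane
    have hgen := hNVgen j i hji
    push_neg at hgen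
    obtain ⟨y₀, hy₀V, x₀, hx₀V, hw⟩ := hgen
    have hx₀ : x₀ ≠ 0 := by
      rintro rfl
      simp only [map_zero] at hw
      exact hw (Submodule.zero_mem _)
    have hy₀ : y₀ ≠ 0 := by
      rintro rfl
      simp only [map_zero, LinearMap.zero_apply] at hw
      exact hw (Submodule.zero_mem _)
    have hmem : N y₀ x₀ ∈ V j ⊔ V i := hNVsub j i hji y₀ hy₀V x₀ hx₀V
    obtain ⟨u, huV, v, hvV, huv⟩ := Submodule.mem_sup.mp hmem
    have hvne : v ≠ 0 := by
      rintro rfl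
      rw [add_zero] at huv
      exact hw (huv ▸ huV)
    have hNxy : N x₀ y₀ = -u - v := by
      rw [hNanti x₀ y₀, ← huv]; abel
    obtain ⟨α, β, hab⟩ := hspan i x₀ hx₀V hx₀ a ha
    have hbz : N b y₀ = 0 := hsame j y₀ hy₀V hy₀ b hb
    have hcmem : N c y₀ ∈ V k ⊔ V j := hNVsub k j hkj c hc y₀ hy₀V
    have hNa : N a y₀ = ((-α) • v + β • J v) + ((-α) • u + β • J u) := by
      rw [hab]
      simp only [map_add, map_smul, LinearMap.add_apply, LinearMap.smul_apply, hNJ, hNxy]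
      simp only [map_sub, map_neg]
      module
    have hk0 : N a y₀ + N c y₀ = 0 := by
      have expand : N (a + b + c) y₀ = N a y₀ + N b y₀ + N c y₀ := by
        simp [map_add, LinearMap.add_apply]
      have h0 := hker y₀
      rw [expand, hbz, add_zero] at h0
      exact h0
    have hsum0 : ((-α) • v + β • J v) + (((-α) • u + β • J u) + N c y₀) = 0 := by
      rw [hNa] at hk0
      rw [← hk0]; abel
    have hp : ((-α) • v + β • J v) ∈ V i :=
      Submodule.add_mem _ (Submodule.smul_mem _ _ hvV) (Submodule.smul_mem _ _ (hJV i v hvV))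
    have hq : (((-α) • u + β • J u) + N c y₀) ∈ V j ⊔ V k := by
      apply Submodule.add_mem
      · exact Submodule.mem_sup_left
          (Submodule.add_mem _ (Submodule.smul_mem _ _ huV)
            (Submodule.smul_mem _ _ (hJV j u huV)))
      · exact (sup_le le_sup_right le_sup_left : V k ⊔ V j ≤ V j ⊔ V k) hcmem
    have hpz : ((-α) • v + β • J v) = 0 := by
      have hpeq : ((-α) • v + β • J v) = -(((-α) • u + β • J u) + N c y₀) :=
        eq_neg_of_add_eq_zero_left hsum0
      have hpmem : ((-α) • v + β • J v) ∈ V i ⊓ (V j ⊔ V k) :=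
        ⟨hp, hpeq ▸ Submodule.neg_mem _ hq⟩
      have := (hdisj i j k hji hki).le_bot hpmem
      simpa using this
    obtain ⟨hα, hβ⟩ := hJpair (-α) β v hvne hpz
    apply hane
    rw [hab, neg_eq_zero.mp hα, hβ]
    simp
  -- decompose ξ and conclude
  intro ξ hξ
  by_contra hcon
  push_neg at hcon
  have htop : ξ ∈ V 0 ⊔ (V 1 ⊔ V 2) := by
    have hle : (⨆ i, V i) ≤ V 0 ⊔ (V 1 ⊔ V 2) := by
      apply iSup_le
      intro i
      fin_cases i
      · exact le_sup_left
      · exact le_sup_of_le_right le_sup_left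
      · exact le_sup_of_le_right le_sup_right
    exact hle (hsum.submodule_iSup_eq_top ▸ Submodule.mem_top)
  obtain ⟨a, ha, bc, hbc, habc⟩ := Submodule.mem_sup.mp htop
  obtain ⟨b, hb, c, hc, hbc'⟩ := Submodule.mem_sup.mp hbc
  have hξeq : ξ = a + b + c := by rw [← habc, ← hbc']; abel
  have hkera : ∀ η, N (a + b + c) η = 0 := by
    intro η; rw [← hξeq]; exact hcon η
  have ha0 : a = 0 := main 0 1 2 (by decide) (by decide) (by decide) a ha b hb c hc hkera
  have hb0 : b = 0 := main 1 0 2 (by decide) (by decide) (by decide) b hb a ha c hc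
    (by intro η; rw [show b + a + c = a + b + c by abel]; exact hkera η)
  have hc0 : c = 0 := main 2 0 1 (by decide) (by decide) (by decide) c hc a ha b hb
    (by intro η; rw [show c + a + b = a + b + c by abel]; exact hkera η)
  exact hξ (by rw [hξeq, ha0, hb0, hc0]; simp)
end

section
/- Let W be a 4-dimensional real vector space, Π₁, Π₂ two 2-dimensional subspaces with W = Π₁ ⊕ Π₂, F : Π₁ → Π₂ a linear isomorphism, and Π₃ = {x + Fx : x ∈ Π₁} its graph. Suppose J and J' are complex structures on W for which Π₁, Π₂ and Π₃ are all complex subspaces, and suppose J and J' agree on Π₁. Then J = J'. -/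
/-- Let `W` be a 4-dimensional real vector space, `P₁, P₂` two
2-dimensional subspaces with `W = P₁ ⊕ P₂`, `F : P₁ → P₂` a linear isomorphism, and
`P₃ = {x + Fx : x ∈ P₁}` its graph. Suppose `J` and `J'` are complex structures on
`W` for which `P₁, P₂, P₃` are all complex subspaces, and suppose `J` and `J'` agree
on `P₁`. Then `J = J'`. -/
theorem stmt_12 (W : Type*) [AddCommGroup W] [Module ℝ W]
    (hW : Module.finrank ℝ W = 4)
    (P₁ P₂ : Submodule ℝ W)
    (hP₁ : Module.finrank ℝ P₁ = 2) (hP₂ : Module.finrank ℝ P₂ = 2)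
    (hcompl : IsCompl P₁ P₂)
    (F : P₁ →ₗ[ℝ] P₂) (hF : Function.Bijective F)
    (P₃ : Submodule ℝ W)
    (hP₃ : P₃ = LinearMap.range (P₁.subtype + P₂.subtype ∘ₗ F))
    (J J' : W →ₗ[ℝ] W)
    (hJ : ∀ x, J (J x) = -x) (hJ' : ∀ x, J' (J' x) = -x)
    (hJ1 : ∀ x ∈ P₁, J x ∈ P₁) (hJ2 : ∀ x ∈ P₂, J x ∈ P₂)
    (hJ3 : ∀ x ∈ P₃, J x ∈ P₃)
    (hJ'1 : ∀ x ∈ P₁, J' x ∈ P₁) (hJ'2 : ∀ x ∈ P₂, J' x ∈ P₂)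
    (hJ'3 : ∀ x ∈ P₃, J' x ∈ P₃)
    (hagree : ∀ x ∈ P₁, J x = J' x) :
    J = J' := by
  -- uniqueness of decomposition
  have uniq : ∀ a a' b b' : W, a ∈ P₁ → a' ∈ P₁ → b ∈ P₂ → b' ∈ P₂ →
      a + b = a' + b' → a = a' ∧ b = b' := by
    intro a a' b b' ha ha' hb hb' h
    have h1 : a - a' = b' - b := by rw [sub_eq_sub_iff_add_eq_add, h, add_comm]
    have hm : a - a' ∈ P₁ ⊓ P₂ := by
      constructor
      · exact sub_mem ha ha'
      · rw [h1]; exact sub_mem hb' hb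
    rw [hcompl.inf_eq_bot, Submodule.mem_bot, sub_eq_zero] at hm
    refine ⟨hm, ?_⟩
    rw [hm] at h
    exact add_right_injective a' h
  -- key: any invariant K maps F x to F of its P₁-part
  have key : ∀ (K : W →ₗ[ℝ] W), (∀ x ∈ P₁, K x ∈ P₁) → (∀ x ∈ P₂, K x ∈ P₂) →
      (∀ x ∈ P₃, K x ∈ P₃) → ∀ x : P₁, ∃ y : P₁, K ↑x = ↑y ∧ K ↑(F x) = ↑(F y) := by
    intro K h1 h2 h3 x
    have hx3 : (↑x + ↑(F x) : W) ∈ P₃ := by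
      rw [hP₃]; exact ⟨x, rfl⟩
    have hK3 := h3 _ hx3
    rw [hP₃] at hK3
    obtain ⟨y, hy⟩ := hK3
    simp only [LinearMap.add_apply, LinearMap.coe_comp, Function.comp_apply,
      Submodule.coe_subtype] at hy
    have hsum : K ↑x + K ↑(F x) = ↑y + ↑(F y) := by
      rw [← map_add]; exact hy.symm
    obtain ⟨e1, e2⟩ := uniq _ _ _ _ (h1 _ x.2) y.2 (h2 _ (F x).2) (F y).2 hsum
    exact ⟨y, e1, e2⟩
  -- agree on P₂
  have hP2agree : ∀ b ∈ P₂, J b = J' b := by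
    intro b hb
    obtain ⟨x, hx⟩ := hF.2 ⟨b, hb⟩
    obtain ⟨y, hy1, hy2⟩ := key J hJ1 hJ2 hJ3 x
    obtain ⟨y', hy'1, hy'2⟩ := key J' hJ'1 hJ'2 hJ'3 x
    have : (y : W) = y' := by rw [← hy1, ← hy'1, hagree _ x.2]
    have hyy : y = y' := Subtype.ext this
    have hbx : (b : W) = ↑(F x) := by rw [hx]
    rw [hbx, hy2, hy'2, hyy]
  -- conclude
  ext w
  have hw : w ∈ P₁ ⊔ P₂ := by rw [hcompl.sup_eq_top]; trivial
  obtain ⟨a, ha, b, hb, rfl⟩ := Submodule.mem_sup.mp hw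
  simp only [map_add, hagree a ha, hP2agree b hb]
end
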